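/- arXiv:1706.07395 — 2 statements merged into one kernel-verified Lean document; each statement's English description precedes it below -/
import Mathlib

section
/- Let T > 0 and ρ > 0 with ρT not an integer multiple of 2π. Then for s ∈ [0,T], G_P(0,s) = 0 if and only if there exists an integer k such that s = T/2 + (2k+1)π/(2ρ). -/
open Real Set

/-- The Green's function of the periodic problem `u'' + ρ²u = 0`,
`u(0) = u(T)`, `u'(0) = u'(T)`. -/
noncomputable def GreenP (T ρ t s : ℝ) : ℝ :=
  if s ≤ t then (sin (ρ * (t - s)) + sin (ρ * (T - t + s))) / (2 * ρ * (1 - cos (ρ * T)))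
  else (sin (ρ * (s - t)) + sin (ρ * (T - s + t))) / (2 * ρ * (1 - cos (ρ * T)))

/-!
By the sum-to-product formula and `1 - cos x = 2 sin² (x / 2)`, the first row of the Green's
function collapses to `G_P(0, s) = cos (ρ (s - T/2)) / (2 ρ sin (ρT/2))`. Non-resonance is exactly
`sin (ρT/2) ≠ 0`, so the zeros of `G_P(0, ·)` are those of `cos (ρ (s - T/2))`.
-/

lemma Real.one_sub_cos_eq_two_mul_sin_half_sq (x : ℝ) : 1 - cos x = 2 * sin (x / 2) ^ 2 := by
  have h := cos_sq_add_sin_sq (x / 2)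
  have h2 := cos_two_mul (x / 2)
  rw [mul_div_cancel₀ x two_ne_zero] at h2
  linarith

lemma Real.sin_half_ne_zero {x : ℝ} (hx : ∀ n : ℤ, x ≠ 2 * n * π) : sin (x / 2) ≠ 0 := by
  rw [Ne, sin_eq_zero_iff, not_exists]
  intro n hn
  exact hx n (by linarith)

lemma greenP_zero_left (T ρ : ℝ) {s : ℝ} (hs : 0 ≤ s) :
    GreenP T ρ 0 s = cos (ρ * (s - T / 2)) / (2 * ρ * sin (ρ * T / 2)) := by
  have hnum : sin (ρ * (s - 0)) + sin (ρ * (T - s + 0)) =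
      2 * sin (ρ * T / 2) * cos (ρ * (s - T / 2)) := by
    rw [sin_add_sin]
    ring_nf
  have hden : 2 * ρ * (1 - cos (ρ * T)) = 2 * sin (ρ * T / 2) * (2 * ρ * sin (ρ * T / 2)) := by
    rw [one_sub_cos_eq_two_mul_sin_half_sq]
    ring
  have hbranch : GreenP T ρ 0 s =
      (sin (ρ * (s - 0)) + sin (ρ * (T - s + 0))) / (2 * ρ * (1 - cos (ρ * T))) := by
    rw [GreenP]
    split_ifs with h
    · obtain rfl := le_antisymm h hs
      rfl
    · rfl
  rw [hbranch, hnum, hden]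
  by_cases hsin : sin (ρ * T / 2) = 0
  · simp [hsin]
  · exact mul_div_mul_left _ _ (mul_ne_zero two_ne_zero hsin)

theorem periodic_green_zeros_general (T ρ : ℝ) (hρ : 0 < ρ)
    (hres : ∀ n : ℤ, ρ * T ≠ 2 * n * π) :
    ∀ s ∈ Icc 0 T,
      (GreenP T ρ 0 s = 0 ↔ ∃ k : ℤ, s = T / 2 + (2 * k + 1) * π / (2 * ρ)) := by
  intro s hs
  have hden : 2 * ρ * sin (ρ * T / 2) ≠ 0 := mul_ne_zero (by positivity) (sin_half_ne_zero hres)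
  rw [greenP_zero_left T ρ hs.1, div_eq_zero_iff, or_iff_left hden, cos_eq_zero_iff]
  refine exists_congr fun k => ?_
  constructor
  · intro h
    field_simp
    linarith
  · rintro rfl
    field_simp
    ring

theorem periodic_green_zeros (T ρ : ℝ) (hT : 0 < T) (hρ : 0 < ρ)
    (hres : ∀ n : ℤ, ρ * T ≠ 2 * n * π) :
    ∀ s ∈ Icc 0 T,
      (GreenP T ρ 0 s = 0 ↔ ∃ k : ℤ, s = T / 2 + (2 * k + 1) * π / (2 * ρ)) :=
  periodic_green_zeros_general T ρ hρ hres
end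

section
/- Let T > 0 and ρ > π/T with ρT not an integer multiple of 2π, and set γ = (∫₀ᵀ G_P⁺(0,s) ds)/(∫₀ᵀ G_P⁻(0,s) ds). Let h : [0,T] → ℝ be continuous and suppose there exist constants m, M with 0 < m ≤ h(t) ≤ M for all t ∈ [0,T] and M/m ≤ γ. Then ∫₀ᵀ G_P(t,s)·h(s) ds ≥ 0 for every t ∈ [0,T]; that is, the unique solution of u'' + ρ²u = h(t), u(0) = u(T), u'(0) = u'(T) is a nonnegative function on [0,T]. -/
/-!
The integrals of `G_P⁺(t, ·)` and `G_P⁻(t, ·)` over `[0, T]` do not depend on `t ∈ [0, T]`: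
`G_P(t, s)` only depends on `|t - s|` through a profile that is symmetric about `T / 2`, so
moving `t` just rearranges `[0, T]`. With `A` and `B` these two integrals, `m ≤ h ≤ M` gives
`∫ G_P(t, s) h(s) ds ≥ m A - M B`, and `M / m ≤ γ = A / B` gives `m A - M B ≥ 0`.
-/

open Real Set intervalIntegral

/-- Positive part of the periodic Green's function. -/
noncomputable def GreenPpos (T ρ t s : ℝ) : ℝ := max (GreenP T ρ t s) 0

/-- Negative part of the periodic Green's function. -/
noncomputable def GreenPneg (T ρ t s : ℝ) : ℝ := max (-(GreenP T ρ t s)) 0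

theorem integral_comp_abs_sub_of_symm {F : ℝ → ℝ} {T t : ℝ} (hF : Continuous F)
    (hsymm : ∀ x, F (T - x) = F x) (ht : t ∈ Icc 0 T) :
    ∫ s in (0 : ℝ)..T, F |t - s| = ∫ s in (0 : ℝ)..T, F s := by
  obtain ⟨ht0, htT⟩ := ht
  have hcont : Continuous fun s ↦ F |t - s| := by fun_prop
  have hleft : ∫ s in (0 : ℝ)..t, F |t - s| = ∫ s in (0 : ℝ)..t, F (t - s) := by
    refine integral_congr fun s hs ↦ ?_
    rw [uIcc_of_le ht0] at hs
    simp only [abs_of_nonneg (sub_nonneg.2 hs.2)]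
  have hright : ∫ s in t..T, F |t - s| = ∫ s in t..T, F (T + t - s) := by
    refine integral_congr fun s hs ↦ ?_
    rw [uIcc_of_le htT] at hs
    simp only [abs_sub_comm t s, abs_of_nonneg (sub_nonneg.2 hs.1), ← hsymm (s - t)]
    ring_nf
  rw [← integral_add_adjacent_intervals (hcont.intervalIntegrable 0 t)
      (hcont.intervalIntegrable t T), hleft, hright, integral_comp_sub_left,
    integral_comp_sub_left, sub_self, sub_zero, add_sub_cancel_right, add_sub_cancel_left,
    integral_add_adjacent_intervals (hF.intervalIntegrable 0 t) (hF.intervalIntegrable t T)]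

theorem sub_le_integral_mul_of_mem_Icc {a b m M : ℝ} {g h : ℝ → ℝ} (hab : a ≤ b)
    (hg : ContinuousOn g (Icc a b)) (hh : ContinuousOn h (Icc a b))
    (hbound : ∀ s ∈ Icc a b, m ≤ h s ∧ h s ≤ M) :
    (∫ s in a..b, max (g s) 0) * m - (∫ s in a..b, max (-g s) 0) * M ≤
      ∫ s in a..b, g s * h s := by
  have hint {f : ℝ → ℝ} (hf : ContinuousOn f (Icc a b)) :
      IntervalIntegrable f MeasureTheory.volume a b :=
    (uIcc_of_le hab ▸ hf).intervalIntegrable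
  have hpos : ContinuousOn (fun s ↦ max (g s) 0) (Icc a b) := hg.sup continuousOn_const
  have hneg : ContinuousOn (fun s ↦ max (-g s) 0) (Icc a b) := hg.neg.sup continuousOn_const
  have hsplit : ∫ s in a..b, g s * h s
      = (∫ s in a..b, max (g s) 0 * h s) - ∫ s in a..b, max (-g s) 0 * h s := by
    rw [← integral_sub (hint (f := fun s ↦ max (g s) 0 * h s) (hpos.mul hh))
      (hint (f := fun s ↦ max (-g s) 0 * h s) (hneg.mul hh))]
    congr 1 with s
    rw [← sub_mul, max_zero_sub_max_neg_zero_eq_self]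
  have hlower : ∫ s in a..b, max (g s) 0 * m ≤ ∫ s in a..b, max (g s) 0 * h s :=
    integral_mono_on hab (hint (hpos.mul continuousOn_const)) (hint (hpos.mul hh))
      fun s hs ↦ mul_le_mul_of_nonneg_left (hbound s hs).1 (le_max_right _ _)
  have hupper : ∫ s in a..b, max (-g s) 0 * h s ≤ ∫ s in a..b, max (-g s) 0 * M :=
    integral_mono_on hab (hint (hneg.mul hh)) (hint (hneg.mul continuousOn_const))
      fun s hs ↦ mul_le_mul_of_nonneg_left (hbound s hs).2 (le_max_right _ _)
  rw [integral_mul_const] at hlower hupper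
  linarith

noncomputable def greenProfile (T ρ x : ℝ) : ℝ :=
  (sin (ρ * x) + sin (ρ * (T - x))) / (2 * ρ * (1 - cos (ρ * T)))

theorem continuous_greenProfile (T ρ : ℝ) : Continuous (greenProfile T ρ) := by
  unfold greenProfile
  fun_prop

theorem greenProfile_sub_left (T ρ x : ℝ) : greenProfile T ρ (T - x) = greenProfile T ρ x := by
  rw [greenProfile, greenProfile, sub_sub_cancel, add_comm]

theorem GreenP_eq_greenProfile (T ρ t s : ℝ) : GreenP T ρ t s = greenProfile T ρ |t - s| := by
  rw [GreenP, greenProfile]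
  split_ifs with hst
  · rw [abs_of_nonneg (sub_nonneg.2 hst)]
    ring_nf
  · rw [abs_sub_comm, abs_of_nonneg (sub_nonneg.2 (not_le.1 hst).le)]
    ring_nf

theorem continuous_GreenP (T ρ t : ℝ) : Continuous (GreenP T ρ t) := by
  have hprofile : Continuous fun s ↦ greenProfile T ρ |t - s| :=
    (continuous_greenProfile T ρ).comp (by fun_prop)
  simpa only [← GreenP_eq_greenProfile] using hprofile

theorem integral_comp_GreenP_eq_integral_comp_GreenP_zero {T ρ t : ℝ} {φ : ℝ → ℝ}
    (hφ : Continuous φ) (ht : t ∈ Icc 0 T) :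
    ∫ s in (0 : ℝ)..T, φ (GreenP T ρ t s) = ∫ s in (0 : ℝ)..T, φ (GreenP T ρ 0 s) := by
  have hsymm (x : ℝ) : φ (greenProfile T ρ (T - x)) = φ (greenProfile T ρ x) := by
    rw [greenProfile_sub_left]
  have hF : Continuous fun x ↦ φ (greenProfile T ρ x) := hφ.comp (continuous_greenProfile T ρ)
  simp only [GreenP_eq_greenProfile]
  rw [integral_comp_abs_sub_of_symm hF hsymm ht,
    integral_comp_abs_sub_of_symm hF hsymm ⟨le_rfl, ht.1.trans ht.2⟩]

theorem mul_le_mul_of_div_le_div {A B m M : ℝ} (hm : 0 < m) (hA : 0 ≤ A) (hB : 0 ≤ B)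
    (h : M / m ≤ A / B) : B * M ≤ A * m := by
  rcases hB.eq_or_lt with rfl | hB
  · simpa using mul_nonneg hA hm.le
  · rw [div_le_div_iff₀ hm hB] at h
    linarith

theorem periodic_linear_nonneg_solution_general (T ρ : ℝ)
    (h : ℝ → ℝ) (hh : ContinuousOn h (Icc 0 T))
    (m M : ℝ) (hm : 0 < m)
    (hbound : ∀ t ∈ Icc 0 T, m ≤ h t ∧ h t ≤ M)
    (hγ : M / m ≤
      (∫ s in (0 : ℝ)..T, GreenPpos T ρ 0 s) / ∫ s in (0 : ℝ)..T, GreenPneg T ρ 0 s) :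
    ∀ t ∈ Icc 0 T, 0 ≤ ∫ s in (0 : ℝ)..T, GreenP T ρ t s * h s := by
  intro t ht
  have hT : 0 ≤ T := ht.1.trans ht.2
  have hlower :=
    sub_le_integral_mul_of_mem_Icc hT (continuous_GreenP T ρ t).continuousOn hh hbound
  rw [integral_comp_GreenP_eq_integral_comp_GreenP_zero (φ := fun y ↦ max y 0)
      (continuous_id.max continuous_const) ht,
    integral_comp_GreenP_eq_integral_comp_GreenP_zero (φ := fun y ↦ max (-y) 0)
      (continuous_neg.max continuous_const) ht] at hlower
  have hpos : 0 ≤ ∫ s in (0 : ℝ)..T, GreenPpos T ρ 0 s :=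
    integral_nonneg hT fun _ _ ↦ le_max_right _ _
  have hneg : 0 ≤ ∫ s in (0 : ℝ)..T, GreenPneg T ρ 0 s :=
    integral_nonneg hT fun _ _ ↦ le_max_right _ _
  have hcross := mul_le_mul_of_div_le_div hm hpos hneg hγ
  simp only [GreenPpos, GreenPneg] at hcross
  linarith

theorem periodic_linear_nonneg_solution (T ρ : ℝ) (hT : 0 < T)
    (hρ : π / T < ρ) (hres : ∀ n : ℤ, ρ * T ≠ 2 * n * π)
    (h : ℝ → ℝ) (hh : ContinuousOn h (Icc 0 T))
    (m M : ℝ) (hm : 0 < m)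
    (hbound : ∀ t ∈ Icc 0 T, m ≤ h t ∧ h t ≤ M)
    (hγ : M / m ≤
      (∫ s in (0 : ℝ)..T, GreenPpos T ρ 0 s) / ∫ s in (0 : ℝ)..T, GreenPneg T ρ 0 s) :
    ∀ t ∈ Icc 0 T, 0 ≤ ∫ s in (0 : ℝ)..T, GreenP T ρ t s * h s :=
  periodic_linear_nonneg_solution_general T ρ h hh m M hm hbound hγ
end
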